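/- (Proposition: the agent's optimal utility is nonincreasing in the type.) Suppose the premia satisfy the premium formula (★): p_θ = p_{θ̲} + ∫₀^{L̄} (1 − g_{θ̲}(F_{θ̲}(l))) r_{θ̲}(l) dl − ∫_{θ̲}^{θ} ∫₀^{L̄} D(s,l) r_s(l) dl ds − ∫₀^{L̄} (1 − g_θ(F_θ(l))) r_θ(l) dl for every θ ∈ Θ. Then for every θ ∈ Θ, U_θ(r_θ, p_θ) = U_{θ̲}(r_{θ̲}, p_{θ̲}) + ∫_{θ̲}^{θ} ∫₀^{L̄} D(s,l) r_s(l) dl ds, and consequently θ ↦ U_θ(r_θ, p_θ) is nonincreasing on Θ. -/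

import Mathlib

/-! Substituting (★) into `Uag` gives the envelope formula by pure algebra. For monotonicity,
the inner integral `I s = ∫₀^{L̄} D(s,l) r_s(l) dl` is nonpositive, and `|I s| ≤ C L̄` because a
(one-sided, at the endpoints of `Θ`) derivative of a `C`-Lipschitz function has norm at most `C`.
Being measurable as well, `I` is integrable on `Θ`, so its primitive is antitone there. -/

open MeasureTheory Topology Set

/-- The agent's Yaari dual utility: `U_θ(r, p) = -p - ∫₀^{L̄} (1 - g_θ(F_θ(l))) r(l) dl`. -/
noncomputable def Uag (g F : ℝ → ℝ → ℝ) (Lbar θ : ℝ) (rr : ℝ → ℝ) (pp : ℝ) : ℝ :=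
  -pp - ∫ l in (0 : ℝ)..Lbar, (1 - g θ (F θ l)) * rr l

theorem nhdsWithin_Icc_diff_singleton_neBot {a b x : ℝ} (hab : a < b) (hx : x ∈ Icc a b) :
    (𝓝[Icc a b \ {x}] x).NeBot := by
  rcases hx.2.lt_or_eq with hxb | rfl
  · have := left_nhdsWithin_Ioo_neBot hxb
    exact this.mono (nhdsWithin_mono _ fun y hy => ⟨⟨hx.1.trans hy.1.le, hy.2.le⟩, hy.1.ne'⟩)
  · have := right_nhdsWithin_Ioo_neBot hab
    exact this.mono (nhdsWithin_mono _ fun y hy => ⟨Ioo_subset_Icc_self hy, hy.2.ne⟩)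

theorem HasDerivWithinAt.norm_le_of_lipschitzOnWith {E : Type*} [NormedAddCommGroup E]
    [NormedSpace ℝ E] {f : ℝ → E} {f' : E} {s : Set ℝ} {x : ℝ} {C : NNReal}
    (hf : HasDerivWithinAt f f' s x) (hx : x ∈ s) (hlip : LipschitzOnWith C f s)
    [(𝓝[s \ {x}] x).NeBot] : ‖f'‖ ≤ C := by
  refine le_of_tendsto (hasDerivWithinAt_iff_tendsto_slope.1 hf).norm ?_
  filter_upwards [self_mem_nhdsWithin] with y hy
  rw [slope_def_module, norm_smul, norm_inv, ← div_eq_inv_mul,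
    div_le_iff₀ (norm_pos_iff.2 (sub_ne_zero.2 hy.2))]
  simpa [dist_eq_norm] using hlip.dist_le_mul y hy.1 x hx

theorem MeasureTheory.StronglyMeasurable.intervalIntegral_right {E : Type*} [NormedAddCommGroup E]
    [NormedSpace ℝ E] {f : ℝ → ℝ → E} (hf : StronglyMeasurable (Function.uncurry f)) (a b : ℝ) :
    StronglyMeasurable fun s => ∫ l in a..b, f s l :=
  (hf.integral_prod_right' (ν := volume.restrict (Ioc a b))).sub
    (hf.integral_prod_right' (ν := volume.restrict (Ioc b a)))

theorem intervalIntegral.norm_integral_mul_le {L C : ℝ} (hL : 0 ≤ L) {d ρ : ℝ → ℝ}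
    (hd : ∀ l ∈ Icc 0 L, ‖d l‖ ≤ C) (hρ : ∀ l ∈ Icc 0 L, ρ l ∈ Icc 0 1) :
    ‖∫ l in 0..L, d l * ρ l‖ ≤ C * L := by
  have hbound : ∀ l ∈ uIoc 0 L, ‖d l * ρ l‖ ≤ C := by
    intro l hl
    rw [uIoc_of_le hL] at hl
    have hl' : l ∈ Icc 0 L := Ioc_subset_Icc_self hl
    have hρl : ‖ρ l‖ ≤ 1 := by
      rw [Real.norm_eq_abs, abs_le]; constructor <;> linarith [(hρ l hl').1, (hρ l hl').2]
    calc ‖d l * ρ l‖ = ‖d l‖ * ‖ρ l‖ := norm_mul _ _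
      _ ≤ C * 1 := mul_le_mul (hd l hl') hρl (norm_nonneg _) ((norm_nonneg _).trans (hd l hl'))
      _ = C := mul_one C
  simpa [abs_of_nonneg hL] using intervalIntegral.norm_integral_le_of_norm_le_const hbound

theorem intervalIntegral.integral_nonpos_of_forall {f : ℝ → ℝ} {a b : ℝ} (hab : a ≤ b)
    (hf : ∀ x ∈ Icc a b, f x ≤ 0) : ∫ x in a..b, f x ≤ 0 := by
  simpa [intervalIntegral.integral_neg] using
    intervalIntegral.integral_nonneg hab fun x hx => neg_nonneg.2 (hf x hx)

theorem antitoneOn_integral_of_nonpos {f : ℝ → ℝ} {a b : ℝ} (hf : IntegrableOn f (Icc a b))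
    (hf_nonpos : ∀ x ∈ Icc a b, f x ≤ 0) : AntitoneOn (fun x => ∫ t in a..x, f t) (Icc a b) := by
  intro x hx y hy hxy
  have hint : ∀ {u v}, u ∈ Icc a b → v ∈ Icc a b → IntervalIntegrable f volume u v :=
    fun hu hv => (hf.mono_set (uIcc_subset_Icc hu hv)).intervalIntegrable
  have hxy_nonpos : ∫ t in x..y, f t ≤ 0 :=
    intervalIntegral.integral_nonpos_of_forall hxy fun t ht =>
      hf_nonpos t ⟨hx.1.trans ht.1, ht.2.trans hy.2⟩
  have ha : a ∈ Icc a b := left_mem_Icc.2 (hx.1.trans hx.2)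
  dsimp only
  rw [← intervalIntegral.integral_add_adjacent_intervals (hint ha hx) (hint hx hy)]
  linarith

theorem agent_utility_antitone_general
    (θlow θhigh Lbar : ℝ) (hθ : θlow < θhigh) (hL : 0 < Lbar)
    (g : ℝ → ℝ → ℝ) (F : ℝ → ℝ → ℝ)
    (r : ℝ → ℝ → ℝ) (p : ℝ → ℝ)
    (hr_meas : Measurable (Function.uncurry r))
    (hr_range : ∀ θ ∈ Set.Icc θlow θhigh, ∀ l ∈ Set.Icc (0 : ℝ) Lbar,
      r θ l ∈ Set.Icc (0 : ℝ) 1)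
    (D : ℝ → ℝ → ℝ)
    (hD : ∀ l ∈ Set.Icc (0 : ℝ) Lbar, ∀ s ∈ Set.Icc θlow θhigh,
      HasDerivWithinAt (fun t => g t (F t l)) (D s l) (Set.Icc θlow θhigh) s)
    (hLip : ∃ C : NNReal, ∀ l ∈ Set.Icc (0 : ℝ) Lbar,
      LipschitzOnWith C (fun s => g s (F s l)) (Set.Icc θlow θhigh))
    (hD_meas : Measurable (Function.uncurry D))
    (hD_nonpos : ∀ s ∈ Set.Icc θlow θhigh, ∀ l ∈ Set.Icc (0 : ℝ) Lbar, D s l ≤ 0)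
    -- the premium formula (★)
    (hstar : ∀ θ ∈ Set.Icc θlow θhigh,
      p θ = p θlow + (∫ l in (0 : ℝ)..Lbar, (1 - g θlow (F θlow l)) * r θlow l)
        - (∫ s in θlow..θ, ∫ l in (0 : ℝ)..Lbar, D s l * r s l)
        - ∫ l in (0 : ℝ)..Lbar, (1 - g θ (F θ l)) * r θ l) :
    (∀ θ ∈ Set.Icc θlow θhigh,
      Uag g F Lbar θ (r θ) (p θ) = Uag g F Lbar θlow (r θlow) (p θlow) +
        ∫ s in θlow..θ, ∫ l in (0 : ℝ)..Lbar, D s l * r s l) ∧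
    ∀ θ₁ ∈ Set.Icc θlow θhigh, ∀ θ₂ ∈ Set.Icc θlow θhigh, θ₁ ≤ θ₂ →
      Uag g F Lbar θ₂ (r θ₂) (p θ₂) ≤ Uag g F Lbar θ₁ (r θ₁) (p θ₁) := by
  obtain ⟨C, hC⟩ := hLip
  set I : ℝ → ℝ := fun s => ∫ l in (0 : ℝ)..Lbar, D s l * r s l
  have hU : ∀ θ ∈ Icc θlow θhigh,
      Uag g F Lbar θ (r θ) (p θ) = Uag g F Lbar θlow (r θlow) (p θlow) + ∫ s in θlow..θ, I s :=
    fun θ hθΘ => by rw [Uag, Uag, hstar θ hθΘ]; ring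
  have hD_bound : ∀ s ∈ Icc θlow θhigh, ∀ l ∈ Icc 0 Lbar, ‖D s l‖ ≤ C := fun s hs l hl =>
    haveI := nhdsWithin_Icc_diff_singleton_neBot hθ hs
    (hD l hl s hs).norm_le_of_lipschitzOnWith hs (hC l hl)
  have hI_meas : StronglyMeasurable I :=
    StronglyMeasurable.intervalIntegral_right (f := fun s l => D s l * r s l)
      (hD_meas.mul hr_meas).stronglyMeasurable 0 Lbar
  have hI_int : IntegrableOn I (Icc θlow θhigh) :=
    Measure.integrableOn_of_bounded (M := C * Lbar) measure_Icc_lt_top.ne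
      hI_meas.aestronglyMeasurable
      ((ae_restrict_iff' measurableSet_Icc).2 (.of_forall fun s hs =>
        intervalIntegral.norm_integral_mul_le hL.le (hD_bound s hs) (hr_range s hs)))
  have hI_nonpos : ∀ s ∈ Icc θlow θhigh, I s ≤ 0 := fun s hs =>
    intervalIntegral.integral_nonpos_of_forall hL.le fun l hl =>
      mul_nonpos_of_nonpos_of_nonneg (hD_nonpos s hs l hl) (hr_range s hs l hl).1
  refine ⟨hU, fun θ₁ h₁ θ₂ h₂ h12 => ?_⟩
  rw [hU θ₁ h₁, hU θ₂ h₂]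
  exact (add_le_add_iff_left _).2 (antitoneOn_integral_of_nonpos hI_int hI_nonpos h₁ h₂ h12)

/-- **The agent's optimal utility is nonincreasing in the type.** If the premia satisfy the
envelope formula (★) (and `D ≤ 0`), then
`U_θ(r_θ, p_θ) = U_{θ̲}(r_{θ̲}, p_{θ̲}) + ∫_{θ̲}^{θ} ∫₀^{L̄} D(s,l) r_s(l) dl ds`, and
consequently `θ ↦ U_θ(r_θ, p_θ)` is nonincreasing on `Θ`. -/
theorem agent_utility_antitone
    (θlow θhigh Lbar : ℝ) (hθ : θlow < θhigh) (hL : 0 < Lbar)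
    (g : ℝ → ℝ → ℝ) (F : ℝ → ℝ → ℝ)
    (hg_mono : ∀ θ ∈ Set.Icc θlow θhigh, MonotoneOn (g θ) (Set.Icc (0 : ℝ) 1))
    (hg0 : ∀ θ ∈ Set.Icc θlow θhigh, g θ 0 = 0)
    (hg1 : ∀ θ ∈ Set.Icc θlow θhigh, g θ 1 = 1)
    (hg_range : ∀ θ ∈ Set.Icc θlow θhigh, ∀ t ∈ Set.Icc (0 : ℝ) 1,
      g θ t ∈ Set.Icc (0 : ℝ) 1)
    (hF_range : ∀ θ ∈ Set.Icc θlow θhigh, ∀ l ∈ Set.Icc (0 : ℝ) Lbar,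
      F θ l ∈ Set.Icc (0 : ℝ) 1)
    (hgF_meas : Measurable fun x : ℝ × ℝ => g x.1 (F x.1 x.2))
    (r : ℝ → ℝ → ℝ) (p : ℝ → ℝ)
    (hr_meas : Measurable (Function.uncurry r)) (hp_meas : Measurable p)
    (hr_range : ∀ θ ∈ Set.Icc θlow θhigh, ∀ l ∈ Set.Icc (0 : ℝ) Lbar,
      r θ l ∈ Set.Icc (0 : ℝ) 1)
    (D : ℝ → ℝ → ℝ)
    (hD : ∀ l ∈ Set.Icc (0 : ℝ) Lbar, ∀ s ∈ Set.Icc θlow θhigh,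
      HasDerivWithinAt (fun t => g t (F t l)) (D s l) (Set.Icc θlow θhigh) s)
    (hLip : ∃ C : NNReal, ∀ l ∈ Set.Icc (0 : ℝ) Lbar,
      LipschitzOnWith C (fun s => g s (F s l)) (Set.Icc θlow θhigh))
    (hD_meas : Measurable (Function.uncurry D))
    (hD_nonpos : ∀ s ∈ Set.Icc θlow θhigh, ∀ l ∈ Set.Icc (0 : ℝ) Lbar, D s l ≤ 0)
    -- the premium formula (★)
    (hstar : ∀ θ ∈ Set.Icc θlow θhigh,
      p θ = p θlow + (∫ l in (0 : ℝ)..Lbar, (1 - g θlow (F θlow l)) * r θlow l)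
        - (∫ s in θlow..θ, ∫ l in (0 : ℝ)..Lbar, D s l * r s l)
        - ∫ l in (0 : ℝ)..Lbar, (1 - g θ (F θ l)) * r θ l) :
    (∀ θ ∈ Set.Icc θlow θhigh,
      Uag g F Lbar θ (r θ) (p θ) = Uag g F Lbar θlow (r θlow) (p θlow) +
        ∫ s in θlow..θ, ∫ l in (0 : ℝ)..Lbar, D s l * r s l) ∧
    ∀ θ₁ ∈ Set.Icc θlow θhigh, ∀ θ₂ ∈ Set.Icc θlow θhigh, θ₁ ≤ θ₂ →
      Uag g F Lbar θ₂ (r θ₂) (p θ₂) ≤ Uag g F Lbar θ₁ (r θ₁) (p θ₁) :=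
  agent_utility_antitone_general θlow θhigh Lbar hθ hL g F r p hr_meas hr_range D hD hLip hD_meas
    hD_nonpos hstar
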